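/- The function f(x, y) = e^{−(x+y)/2}·(e^{√(xy)} − 1) is nondecreasing in each variable on (0,1]²; that is, for all 0 < x₁ ≤ x₂ ≤ 1 and 0 < y ≤ 1, one has f(x₁, y) ≤ f(x₂, y), and symmetrically in the second variable. -/

import Mathlib

/-!
For fixed `y > 0`, write `s = √(xy)`. Differentiating in `x` gives
`∂ₓ f = e^{-(x+y)/2} (e^s y / s - (e^s - 1)) / 2`. For `x ≤ 1` we have `s² = xy ≤ y`, so
`y / s ≥ s`, and `e^s - 1 ≤ s e^s` (i.e. `1 - s ≤ e^{-s}`), hence `∂ₓ f ≥ 0`.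
Monotonicity in `y` follows from the symmetry `f(x, y) = f(y, x)`.
-/

noncomputable def fBh (x y : ℝ) : ℝ :=
  Real.exp (-(x + y) / 2) * (Real.exp (Real.sqrt (x * y)) - 1)

open Real Set

lemma fBh_comm (x y : ℝ) : fBh x y = fBh y x := by
  rw [fBh, fBh, mul_comm x, add_comm x]

lemma exp_sub_one_le_mul_exp (s : ℝ) : exp s - 1 ≤ s * exp s := by
  have h := mul_le_mul_of_nonneg_left (one_sub_le_exp_neg s) (exp_pos s).le
  rw [← exp_add, add_neg_cancel, exp_zero] at h
  linarith

lemma hasDerivAt_fBh_left {x y : ℝ} (hx : 0 < x) (hy : 0 < y) :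
    HasDerivAt (fun x => fBh x y)
      (exp (-(x + y) / 2) * (exp √(x * y) * y / √(x * y) - (exp √(x * y) - 1)) / 2) x := by
  have hxy : x * y ≠ 0 := (mul_pos hx hy).ne'
  have hexp : HasDerivAt (fun x => exp (-(x + y) / 2)) (exp (-(x + y) / 2) * (-1 / 2)) x := by
    simpa using (((hasDerivAt_id x).add_const y).neg.div_const 2).exp
  have hsqrt : HasDerivAt (fun x => exp √(x * y) - 1)
      (exp √(x * y) * (y / (2 * √(x * y)))) x := by
    simpa [div_eq_inv_mul, mul_comm] using
      (((hasDerivAt_id x).mul_const y).sqrt hxy).exp.sub_const 1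
  exact (hexp.mul hsqrt).congr_deriv (by ring)

lemma exp_sqrt_mul_sub_one_le {x y : ℝ} (hx : 0 < x) (hx₁ : x ≤ 1) (hy : 0 < y) :
    exp √(x * y) - 1 ≤ exp √(x * y) * y / √(x * y) := by
  set s := √(x * y)
  have hs₀ : 0 < s := sqrt_pos.mpr (mul_pos hx hy)
  have hs_le : s ≤ y / s := by
    rw [le_div_iff₀ hs₀, mul_self_sqrt (mul_pos hx hy).le]
    nlinarith
  calc exp s - 1 ≤ s * exp s := exp_sub_one_le_mul_exp s
    _ ≤ y / s * exp s := by gcongr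
    _ = exp s * y / s := by ring

lemma fBh_monotoneOn_left {y : ℝ} (hy : 0 < y) : MonotoneOn (fun x => fBh x y) (Icc 0 1) := by
  have hcont : Continuous (fun x => fBh x y) := by unfold fBh; fun_prop
  refine monotoneOn_of_hasDerivWithinAt_nonneg (convex_Icc 0 1) hcont.continuousOn
    (fun x hx => (hasDerivAt_fBh_left (interior_Icc.subset hx).1 hy).hasDerivWithinAt)
    fun x hx => ?_
  rw [interior_Icc] at hx
  have hsub := sub_nonneg.mpr (exp_sqrt_mul_sub_one_le hx.1 hx.2.le hy)
  positivity

theorem fBh_monotone :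
    (∀ x₁ x₂ y : ℝ, 0 < x₁ → x₁ ≤ x₂ → x₂ ≤ 1 → 0 < y → y ≤ 1 →
      fBh x₁ y ≤ fBh x₂ y) ∧
    (∀ x y₁ y₂ : ℝ, 0 < x → x ≤ 1 → 0 < y₁ → y₁ ≤ y₂ → y₂ ≤ 1 →
      fBh x y₁ ≤ fBh x y₂) := by
  refine ⟨fun x₁ x₂ y hx₁ h₁₂ hx₂ hy _ => ?_, fun x y₁ y₂ hx _ hy₁ h₁₂ hy₂ => ?_⟩
  · exact fBh_monotoneOn_left hy ⟨hx₁.le, h₁₂.trans hx₂⟩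
      ⟨hx₁.le.trans h₁₂, hx₂⟩ h₁₂
  · rw [fBh_comm x, fBh_comm x]
    exact fBh_monotoneOn_left hx ⟨hy₁.le, h₁₂.trans hy₂⟩
      ⟨hy₁.le.trans h₁₂, hy₂⟩ h₁₂
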